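/- For every x > 0, x·e^{1/(2x) − 1/(12x²)} − x < e^{ψ(x+1)} − x < x·e^{1/(2x)} − x. -/

import Mathlib

/-!
Convexity of `log ∘ Gamma` squeezes `ψ (y + 1) - log y` between `0` and `log (1 + 1 / y)`, so it
tends to `0`. By the recurrence `ψ (y + 1) = ψ y + 1 / y`, the gap between `ψ (y + 1)` and either
bound strictly decreases under `y ↦ y + 1`, which amounts to an elementary inequality for
`log (1 + 1 / y)`; a function that strictly decreases under `y ↦ y + 1` and tends to `0` is positive.
-/

open Real Filter Set

/-- The digamma (psi) function: the logarithmic derivative of the gamma function. -/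
noncomputable def psi (x : ℝ) : ℝ := deriv (fun t : ℝ => Real.log (Real.Gamma t)) x

open Topology

lemma pos_of_hasDerivAt_pos {F F' : ℝ → ℝ} {a t : ℝ} (ha : F a = 0)
    (hF : ∀ s, a ≤ s → HasDerivAt F (F' s) s) (hF' : ∀ s, a < s → 0 < F' s) (ht : a < t) :
    0 < F t := by
  have hmono : StrictMonoOn F (Ici a) := by
    refine strictMonoOn_of_hasDerivWithinAt_pos (f' := F') (convex_Ici a)
      (fun s hs => (hF s hs).continuousAt.continuousWithinAt) (fun s hs => ?_) (fun s hs => ?_)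
    · rw [interior_Ici] at hs
      exact (hF s hs.le).hasDerivWithinAt
    · rw [interior_Ici] at hs
      exact hF' s hs
  simpa [ha] using hmono self_mem_Ici ht.le ht

lemma log_lt_sub_inv_div_two {t : ℝ} (ht : 1 < t) : log t < (t - t⁻¹) / 2 := by
  suffices 0 < (t - t⁻¹) / 2 - log t by linarith
  refine pos_of_hasDerivAt_pos (F := fun s => (s - s⁻¹) / 2 - log s)
    (F' := fun s => (s - 1) ^ 2 / (2 * s ^ 2)) (by simp) (fun s hs => ?_)
    (fun s hs => div_pos (pow_pos (by linarith) 2) (by positivity)) ht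
  have hs0 : s ≠ 0 := (by linarith : (0 : ℝ) < s).ne'
  refine ((((hasDerivAt_id' s).sub (hasDerivAt_inv hs0)).div_const 2).sub
    (hasDerivAt_log hs0)).congr_deriv ?_
  field_simp
  ring

lemma sub_inv_div_two_sub_lt_log {t : ℝ} (ht : 1 < t) :
    (t - t⁻¹) / 2 - (t + 1) * (t - 1) ^ 3 / (12 * t ^ 2) < log t := by
  suffices 0 < log t - (t - t⁻¹) / 2 + (t + 1) * (t - 1) ^ 3 / (12 * t ^ 2) by linarith
  refine pos_of_hasDerivAt_pos
    (F := fun s => log s - (s - s⁻¹) / 2 + (s + 1) * (s - 1) ^ 3 / (12 * s ^ 2))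
    (F' := fun s => (s - 1) ^ 4 / (6 * s ^ 3)) (by simp) (fun s hs => ?_)
    (fun s hs => div_pos (pow_pos (by linarith) 4) (by positivity)) ht
  have hs0 : s ≠ 0 := (by linarith : (0 : ℝ) < s).ne'
  refine ((hasDerivAt_log hs0).sub
    (((hasDerivAt_id' s).sub (hasDerivAt_inv hs0)).div_const 2)).add
    ((((hasDerivAt_id' s).add_const 1).mul (((hasDerivAt_id' s).sub_const 1).pow 3)).div
      ((hasDerivAt_pow 2 s).const_mul 12) (by positivity)) |>.congr_deriv ?_
  simp only [Pi.mul_apply, Pi.pow_apply]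
  field_simp
  ring

lemma log_add_one_sub_log_lt {y : ℝ} (hy : 0 < y) :
    log (y + 1) - log y < 1 / (2 * y) + 1 / (2 * (y + 1)) := by
  have ht : 1 < (y + 1) / y := by rw [one_lt_div hy]; linarith
  rw [← log_div (by positivity) hy.ne']
  convert log_lt_sub_inv_div_two ht using 1
  field_simp
  ring

lemma lt_log_add_one_sub_log {y : ℝ} (hy : 0 < y) :
    1 / (y + 1) + (1 / (2 * y) - 1 / (12 * y ^ 2)) - (1 / (2 * (y + 1)) - 1 / (12 * (y + 1) ^ 2))
      < log (y + 1) - log y := by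
  have ht : 1 < (y + 1) / y := by rw [one_lt_div hy]; linarith
  rw [← log_div (by positivity) hy.ne']
  convert sub_inv_div_two_sub_lt_log ht using 1
  field_simp
  ring

lemma log_Gamma_add_one {y : ℝ} (hy : 0 < y) : log (Gamma (y + 1)) = log (Gamma y) + log y := by
  rw [Gamma_add_one hy.ne', log_mul hy.ne' (Gamma_pos_of_pos hy).ne', add_comm]

lemma differentiableAt_log_Gamma {y : ℝ} (hy : 0 < y) :
    DifferentiableAt ℝ (fun t => log (Gamma t)) y := by
  refine (differentiableAt_Gamma ?_).log (Gamma_ne_zero ?_) <;>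
    exact fun m => ((neg_nonpos.mpr m.cast_nonneg).trans_lt hy).ne'

lemma psi_add_one {y : ℝ} (hy : 0 < y) : psi (y + 1) = psi y + y⁻¹ := by
  unfold psi
  rw [← deriv_comp_add_const, ← deriv_log,
    ← deriv_add (differentiableAt_log_Gamma hy) (differentiableAt_log hy.ne')]
  refine EventuallyEq.deriv_eq ?_
  filter_upwards [eventually_gt_nhds hy] using fun t ht => log_Gamma_add_one ht

lemma psi_le_log {y : ℝ} (hy : 0 < y) : psi y ≤ log y := by
  have hslope := convexOn_log_Gamma.deriv_le_slope (mem_Ioi.mpr hy)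
    (mem_Ioi.mpr (by linarith : 0 < y + 1)) (lt_add_one y) (differentiableAt_log_Gamma hy)
  rwa [slope_def_field, add_sub_cancel_left, div_one, Function.comp_apply, Function.comp_apply,
    log_Gamma_add_one hy, add_sub_cancel_left] at hslope

lemma log_le_psi_add_one {y : ℝ} (hy : 0 < y) : log y ≤ psi (y + 1) := by
  have hslope := convexOn_log_Gamma.slope_le_deriv (mem_Ioi.mpr hy)
    (mem_Ioi.mpr (by linarith : 0 < y + 1)) (lt_add_one y)
    (differentiableAt_log_Gamma (by linarith : 0 < y + 1))
  rwa [slope_def_field, add_sub_cancel_left, div_one, Function.comp_apply, Function.comp_apply,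
    log_Gamma_add_one hy, add_sub_cancel_left] at hslope

lemma tendsto_psi_add_one_sub_log :
    Tendsto (fun y => psi (y + 1) - log y) atTop (𝓝 0) := by
  refine tendsto_of_tendsto_of_tendsto_of_le_of_le' tendsto_const_nhds
    (tendsto_log_comp_add_sub_log 1) ?_ ?_
  · filter_upwards [eventually_gt_atTop 0] with y hy
    exact sub_nonneg.mpr (log_le_psi_add_one hy)
  · filter_upwards [eventually_gt_atTop 0] with y hy
    exact sub_le_sub_right (psi_le_log (by linarith)) _

lemma pos_of_add_one_lt_of_tendsto_zero {h : ℝ → ℝ} (hstep : ∀ y, 0 < y → h (y + 1) < h y)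
    (hlim : Tendsto h atTop (𝓝 0)) {x : ℝ} (hx : 0 < x) : 0 < h x := by
  have hanti : StrictAnti fun n : ℕ => h (x + n) := strictAnti_nat_of_succ_lt fun n => by
    simpa [add_assoc] using hstep (x + n) (by positivity)
  have hlim' : Tendsto (fun n : ℕ => h (x + n)) atTop (𝓝 0) :=
    hlim.comp (tendsto_atTop_add_const_left _ x tendsto_natCast_atTop_atTop)
  simpa using (hanti.antitone.le_of_tendsto hlim' 1).trans_lt (hanti zero_lt_one)

lemma log_add_lt_psi_add_one {x : ℝ} (hx : 0 < x) :
    log x + (1 / (2 * x) - 1 / (12 * x ^ 2)) < psi (x + 1) := by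
  have hcorr : Tendsto (fun y : ℝ => 1 / (2 * y) - 1 / (12 * y ^ 2)) atTop (𝓝 0) := by
    simpa only [sub_zero, id_eq] using
      ((tendsto_const_nhds (x := (1 : ℝ))).div_atTop (tendsto_id.const_mul_atTop two_pos)).sub
      ((tendsto_const_nhds (x := (1 : ℝ))).div_atTop
        ((tendsto_pow_atTop two_ne_zero).const_mul_atTop (by norm_num : (0 : ℝ) < 12)))
  have hpos := pos_of_add_one_lt_of_tendsto_zero
    (h := fun y => psi (y + 1) - log y - (1 / (2 * y) - 1 / (12 * y ^ 2)))
    (fun y hy => ?_) (by simpa only [sub_zero] using tendsto_psi_add_one_sub_log.sub hcorr) hx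
  · linarith
  · have hlog := lt_log_add_one_sub_log hy
    simp only [psi_add_one (by linarith : 0 < y + 1), inv_eq_one_div]
    linarith

lemma psi_add_one_lt_log_add {x : ℝ} (hx : 0 < x) : psi (x + 1) < log x + 1 / (2 * x) := by
  have hcorr : Tendsto (fun y : ℝ => 1 / (2 * y)) atTop (𝓝 0) :=
    tendsto_const_nhds.div_atTop (tendsto_id.const_mul_atTop two_pos)
  have hpos := pos_of_add_one_lt_of_tendsto_zero (h := fun y => log y + 1 / (2 * y) - psi (y + 1))
    (fun y hy => ?_) ?_ hx
  · linarith
  · have hlog := log_add_one_sub_log_lt hy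
    have hhalf : 1 / (y + 1) = 1 / (2 * (y + 1)) + 1 / (2 * (y + 1)) := by field_simp; ring
    simp only [psi_add_one (by linarith : 0 < y + 1), inv_eq_one_div]
    linarith
  · have hlim := (tendsto_psi_add_one_sub_log.sub hcorr).neg
    rw [sub_zero, neg_zero] at hlim
    exact hlim.congr fun y => by ring

theorem Q_exp_bounds (x : ℝ) (hx : 0 < x) :
    x * Real.exp (1/(2*x) - 1/(12*x^2)) - x < Real.exp (psi (x + 1)) - x ∧
      Real.exp (psi (x + 1)) - x < x * Real.exp (1/(2*x)) - x := by
  have hmul (a : ℝ) : x * exp a = exp (log x + a) := by rw [exp_add, exp_log hx]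
  rw [hmul, hmul, sub_lt_sub_iff_right, sub_lt_sub_iff_right, exp_lt_exp, exp_lt_exp]
  exact ⟨log_add_lt_psi_add_one hx, psi_add_one_lt_log_add hx⟩
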